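/- Let M = (W,R) with W = {0,1} and R = {(0,1),(1,0)}, and let M' = (W',R') with W' = {⋆} and R' = {(⋆,⋆)}. Then: (i) the relation Z = W × W' is a bisimulation (for basic modal logic without propositional symbols) between the pointed frames (M,0) and (M',⋆); (ii) nevertheless, in the memory semantics with empty initial memory, M', ∅, ⋆ ⊨ ◇k while M, ∅, 0 ⊭ ◇k. Hence the memory operators of B(⟨r⟩,k) can distinguish basic-modally bisimilar pointed models. -/
import Mathlib


/-- Formulas of the memory logic B(⟨r⟩,k):  F ::= k | ¬F | F ∧ F | ◇F. -/
inductive MForm : Type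
  | known : MForm
  | neg : MForm → MForm
  | conj : MForm → MForm → MForm
  | dia : MForm → MForm
deriving DecidableEq

namespace MForm

def disj (φ ψ : MForm) : MForm := neg (conj (neg φ) (neg ψ))
def impl (φ ψ : MForm) : MForm := neg (conj φ (neg ψ))
def box (φ : MForm) : MForm := neg (dia (neg φ))
def bot : MForm := conj known (neg known)
def top : MForm := disj known (neg known)

end MForm

/-- Satisfaction for B(⟨r⟩,k) on a Kripke frame (W, R), at state `w`, with memory `S`.
`◇` is the remember-and-move operator: the current state is added to the memory. -/
def MSat {W : Type*} (R : W → W → Prop) : Set W → W → MForm → Prop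
  | S, w, .known => w ∈ S
  | S, w, .neg φ => ¬ MSat R S w φ
  | S, w, .conj φ ψ => MSat R S w φ ∧ MSat R S w ψ
  | S, w, .dia φ => ∃ t, R w t ∧ MSat R (S ∪ {w}) t φ

/-- A formula is satisfiable iff it holds at some state of some frame with empty initial memory. -/
def MSatisfiable (φ : MForm) : Prop :=
  ∃ (W : Type) (R : W → W → Prop) (s : W), MSat R ∅ s φ

namespace MForm

/-- The macro s ≡ ◇□⊥ : "the current state sees a dead end". -/
def sees : MForm := dia (box bot)

/-- a-or-b ≡ k ∧ ◇(k ∧ ¬s). -/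
def aorb : MForm := conj known (dia (conj known (neg sees)))

/-- c ≡ k ∧ □(k → s). -/
def cmac : MForm := conj known (box (impl known sees))

/-- The formula `Inf`, the conjunction of the seven conjuncts (1)–(7). -/
def infF : MForm :=
  conj sees <|                                                              -- (1) s
  conj (box (neg sees)) <|                                                  -- (2) □¬s
  conj (box (box (impl known sees))) <|                                     -- (3) □□(k → s)
  conj (dia (dia known)) <|                                                 -- (4) ◇◇k
  conj (box (impl (dia top) (dia (conj (neg known) (neg sees))))) <|        -- (5)
  conj (box (box (impl (neg sees)
        (dia (conj known (conj sees (dia (conj known (box (impl known sees)))))))))) <|  -- (6)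
  box (box (impl (neg sees) (box (impl (neg sees)
        (dia (conj known (conj sees (box (impl aorb (dia cmac))))))))))     -- (7)

end MForm

/-- A state `x` "sees a dead end": some successor of `x` has no successor. -/
def seesDeadEnd {W : Type*} (R : W → W → Prop) (x : W) : Prop :=
  ∃ y, R x y ∧ ∀ z, ¬ R y z

/-- A bisimulation for basic modal logic (without propositional symbols) between
the pointed frames (W,R,w) and (W',R',w'). -/
def Bisim {W W' : Type*} (R : W → W → Prop) (R' : W' → W' → Prop)
    (w : W) (w' : W') (Z : W → W' → Prop) : Prop :=
  Z w w' ∧ ∀ a b, Z a b →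
    (∀ a', R a a' → ∃ b', R' b b' ∧ Z a' b') ∧
    (∀ b', R' b b' → ∃ a', R a a' ∧ Z a' b')

/-- The two-element frame M: W = {0,1}, R = {(0,1),(1,0)}. -/
def Rtwo : Fin 2 → Fin 2 → Prop := fun a b => (a = 0 ∧ b = 1) ∨ (a = 1 ∧ b = 0)

/-- The one-element reflexive frame M': W' = {⋆}, R' = {(⋆,⋆)}. -/
def Rloop : Unit → Unit → Prop := fun _ _ => True

/-- (i) the full relation Z = W × W' is a basic-modal bisimulation
between (M,0) and (M',⋆); (ii) nevertheless, with empty initial memory,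
M', ∅, ⋆ ⊨ ◇k while M, ∅, 0 ⊭ ◇k.  Hence the memory operators of B(⟨r⟩,k)
distinguish basic-modally bisimilar pointed models. -/
theorem memory_distinguishes_bisimilar :
    Bisim Rtwo Rloop 0 () (fun _ _ => True) ∧
    MSat Rloop ∅ () (MForm.dia MForm.known) ∧
    ¬ MSat Rtwo ∅ 0 (MForm.dia MForm.known) := by
  refine ⟨⟨trivial, ?_⟩, ⟨(), trivial, by simp [MSat]⟩, ?_⟩
  · rintro a b -
    refine ⟨fun a' _ => ⟨(), trivial, trivial⟩, fun b' _ => ?_⟩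
    rcases Fin.exists_fin_two.mpr (Or.inl rfl) with _
    fin_cases a
    · exact ⟨1, Or.inl ⟨rfl, rfl⟩, trivial⟩
    · exact ⟨0, Or.inr ⟨rfl, rfl⟩, trivial⟩
  · rintro ⟨t, ht, hm⟩
    rcases ht with ⟨-, rfl⟩ | ⟨h, -⟩
    · simpa [MSat, Set.mem_union] using hm
    · exact absurd h (by decide)
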